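/- arXiv:2602.19176 — 5 statements merged into one kernel-verified Lean document; each statement's English description precedes it below -/
import Mathlib

section
/- Let p and q be distinct odd positive integers with gcd(p,q) = 1, both dividing t. If α : ℤ/2t → {±1} satisfies both α(p + i) = -α(i) and α(q + i) = -α(i) for all i, then α(i + 1) = -α(i) for all i, i.e., α is strictly alternating. -/
/-!
Write `1 = a p + b q` (Bézout). Since `p` and `q` are odd, `a + b ≡ a p + b q = 1 (mod 2)`, so
shifting by `1 = a p + b q` composes an odd number of antiperiodic shifts and negates `α`.
-/

open Function

theorem Int.odd_add_of_mul_add_mul_eq_one {a b m n : ℤ} (hm : Odd m) (hn : Odd n)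
    (h : a * m + b * n = 1) : Odd (a + b) := by
  have hodd : Odd (a * m + b * n) := h ▸ odd_one
  simpa [Int.odd_add, Int.odd_mul, Int.even_mul, hm, Int.not_even_iff_odd.mpr hm,
    Int.not_even_iff_odd.mpr hn] using hodd

theorem Function.Antiperiodic.zsmul_add_zsmul {α β : Type*} [AddGroup α] [SubtractionMonoid β]
    {f : α → β} {c₁ c₂ : α} (h₁ : Antiperiodic f c₁) (h₂ : Antiperiodic f c₂) {a b : ℤ}
    (hab : Odd (a + b)) : Antiperiodic f (a • c₁ + b • c₂) := by
  intro x
  rw [← add_assoc, h₂.add_zsmul_eq, h₁.add_zsmul_eq, smul_smul, ← Units.val_mul,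
    ← Int.negOnePow_add, add_comm, Int.negOnePow_odd _ hab, Units.val_neg, Units.val_one,
    neg_one_zsmul]

theorem Function.Antiperiodic.one_of_odd_of_coprime {α β : Type*} [Ring α]
    [SubtractionMonoid β] {f : α → β} {p q : ℕ} (hp : Odd p) (hq : Odd q) (hpq : p.Coprime q)
    (hfp : Antiperiodic f p) (hfq : Antiperiodic f q) : Antiperiodic f 1 := by
  have hbezout : p.gcdA q * p + p.gcdB q * q = 1 := by
    rw [mul_comm, mul_comm (p.gcdB q), ← Nat.gcd_eq_gcd_ab, hpq, Nat.cast_one]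
  have hodd : Odd (p.gcdA q + p.gcdB q) :=
    Int.odd_add_of_mul_add_mul_eq_one (by exact_mod_cast hp) (by exact_mod_cast hq) hbezout
  have hone : p.gcdA q • (p : α) + p.gcdB q • (q : α) = 1 := by
    simpa [zsmul_eq_mul] using congrArg (Int.cast : ℤ → α) hbezout
  simpa only [hone] using hfp.zsmul_add_zsmul hfq hodd

theorem stmt3_general (t p q : ℕ) (hp : Odd p) (hq : Odd q)
    (hcop : Nat.gcd p q = 1)
    (α : ZMod (2 * t) → ℤ)
    (ha₁ : ∀ i, α ((p : ZMod (2 * t)) + i) = -α i)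
    (ha₂ : ∀ i, α ((q : ZMod (2 * t)) + i) = -α i) :
    ∀ i : ZMod (2 * t), α (i + 1) = -α i :=
  Antiperiodic.one_of_odd_of_coprime hp hq hcop
    (fun i ↦ add_comm i _ ▸ ha₁ i) (fun i ↦ add_comm i _ ▸ ha₂ i)

/-- If `p` and `q` are distinct coprime odd positive divisors of `t`
and `α : ℤ/2t → {±1}` satisfies both `α(p + i) = -α(i)` and `α(q + i) = -α(i)`,
then `α(i + 1) = -α(i)` for all `i`, i.e. `α` is strictly alternating. -/
theorem stmt3 (t p q : ℕ) (ht : 1 ≤ t) (hp : Odd p) (hq : Odd q)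
    (hppos : 0 < p) (hqpos : 0 < q) (hpq : p ≠ q) (hcop : Nat.gcd p q = 1)
    (hpd : p ∣ t) (hqd : q ∣ t)
    (α : ZMod (2 * t) → ℤ) (hval : ∀ i, α i = 1 ∨ α i = -1)
    (ha₁ : ∀ i, α ((p : ZMod (2 * t)) + i) = -α i)
    (ha₂ : ∀ i, α ((q : ZMod (2 * t)) + i) = -α i) :
    ∀ i : ZMod (2 * t), α (i + 1) = -α i :=
  stmt3_general t p q hp hq hcop α ha₁ ha₂
end

section
/- Let p be an odd prime dividing t, and let 0 ≤ k ≤ k' with p^{k'} dividing t. If α : ℤ/2t → {±1} satisfies α(p^k + i) = -α(i) for all i, then α also satisfies α(p^{k'} + i) = -α(i) for all i. In other words, T_{2t,p^k} ⊆ T_{2t,p^{k'}}. -/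
/-- For `p` an odd prime dividing `t` and `0 ≤ k ≤ k'` with `p^k' ∣ t`:
if `α : ℤ/2t → {±1}` satisfies `α(p^k + i) = -α(i)` for all `i`, then it also
satisfies `α(p^k' + i) = -α(i)` for all `i`.  (In set terms, `T_{2t,p^k} ⊆ T_{2t,p^k'}`.) -/
theorem stmt4 (t p k k' : ℕ) (ht : 1 ≤ t) (hp : p.Prime) (hodd : Odd p)
    (hpt : p ∣ t) (hkk' : k ≤ k') (hk' : p ^ k' ∣ t)
    (α : ZMod (2 * t) → ℤ) (hval : ∀ i, α i = 1 ∨ α i = -1)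
    (ha : ∀ i, α (((p ^ k : ℕ) : ZMod (2 * t)) + i) = -α i) :
    ∀ i, α (((p ^ k' : ℕ) : ZMod (2 * t)) + i) = -α i := by
  have key : ∀ n : ℕ, ∀ i, α (((n * p ^ k : ℕ) : ZMod (2 * t)) + i) = (-1) ^ n * α i := by
    intro n
    induction n with
    | zero => intro i; simp
    | succ m ih =>
      intro i
      have : (((m + 1) * p ^ k : ℕ) : ZMod (2 * t)) + i
          = ((p ^ k : ℕ) : ZMod (2 * t)) + (((m * p ^ k : ℕ) : ZMod (2 * t)) + i) := by
        push_cast; ring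
      rw [this, ha, ih]; ring
  intro i
  have hd : p ^ (k' - k) * p ^ k = p ^ k' := by
    rw [← pow_add]; congr 1; omega
  have := key (p ^ (k' - k)) i
  rw [hd] at this
  rw [this, (hodd.pow).neg_one_pow]
  ring
end

section
/- Let t = 2^a · u with u odd, and write the prime factorization u = p₁^{s₁} ⋯ p_n^{s_n}. Then the union T_{2t} := ⋃_{m | t} T_{2t,m} has cardinality |T_{2t}| = Σ_{l=0}^{a} 2^{2^l · u}. -/
/-!
Writing `m = 2^l v` with `v` odd, an `m`-antiperiodic sequence is also `2^l u`-antiperiodic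
(`2^l u` is an odd multiple of `m`), so `T_{2t}` is the union of the sets `T_{2t, 2^l u}`,
`l ≤ a`. These are pairwise disjoint: antiperiodicity for `M` makes a sequence periodic for
every even multiple of `M`, so it cannot also be antiperiodic there. Finally `2t / 2^l u` is
even, so an element of `T_{2t, 2^l u}` amounts to an arbitrary choice of signs on
`0, …, 2^l u - 1`, which gives `2^(2^l u)` elements.
-/

open Function

theorem Nat.exists_two_pow_mul_eq_mul_odd {a u m : ℕ} (hu : Odd u) (hm : m ∣ 2 ^ a * u) :
    ∃ l ≤ a, ∃ k, Odd k ∧ 2 ^ l * u = m * k := by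
  have hm0 : m ≠ 0 := by
    rintro rfl
    simp [hu.pos.ne'] at hm
  obtain ⟨l, v, hv, rfl⟩ := Nat.exists_eq_two_pow_mul_odd hm0
  have hl : 2 ^ l ∣ 2 ^ a :=
    (Nat.Coprime.pow_left l (Nat.coprime_two_left.mpr hu)).dvd_of_dvd_mul_right
      (dvd_of_mul_right_dvd hm)
  obtain ⟨w, rfl⟩ : v ∣ u :=
    (Nat.Coprime.pow_right a (Nat.coprime_two_right.mpr hv)).dvd_of_dvd_mul_left
      (dvd_of_mul_left_dvd hm)
  exact ⟨l, (Nat.pow_dvd_pow_iff_le_right one_lt_two).mp hl, w, (Nat.odd_mul.mp hu).2,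
    by ring⟩

theorem neg_one_pow_mod_of_even {c : ℕ} (hc : Even c) (k : ℕ) :
    (-1 : ℤ) ^ (k % c) = (-1) ^ k := by
  conv_rhs => rw [← Nat.mod_add_div k c, pow_add, (hc.mul_right _).neg_one_pow, mul_one]

namespace SignSeq

variable {n : ℕ}

/-- The set `T_{n,m}` of the paper (there `n = 2t`). -/
def antiperiodicSigns (n m : ℕ) : Set (ZMod n → ℤ) :=
  {α | (∀ i, α i = 1 ∨ α i = -1) ∧ Antiperiodic α (m : ZMod n)}

theorem antiperiodicSigns_subset_mul_of_odd {m k : ℕ} (hk : Odd k) :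
    antiperiodicSigns n m ⊆ antiperiodicSigns n (m * k) := fun _ hα =>
  ⟨hα.1, fun x => by
    rw [Nat.cast_mul, mul_comm, hα.2.add_nat_mul_eq, hk.neg_one_pow, neg_one_mul]⟩

theorem disjoint_antiperiodicSigns_mul_of_even {m k : ℕ} (hk : Even k) :
    Disjoint (antiperiodicSigns n m) (antiperiodicSigns n (m * k)) := by
  refine Set.disjoint_left.mpr fun α hα hα' => ?_
  have hper := hα.2.add_nat_mul_eq (x := 0) k
  rw [← mul_comm, ← Nat.cast_mul, hα'.2 0, hk.neg_one_pow, one_mul] at hper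
  rcases hα.1 0 with h | h <;> omega

theorem pairwise_disjoint_antiperiodicSigns_two_pow_mul (u : ℕ) :
    Pairwise (Disjoint on fun l : ℕ => antiperiodicSigns n (2 ^ l * u)) := by
  intro l l' hne
  wlog hl : l < l' generalizing l l'
  · exact (this hne.symm (by omega)).symm
  have h : 2 ^ l' * u = 2 ^ l * u * 2 ^ (l' - l) := by
    rw [mul_right_comm, ← pow_add, Nat.add_sub_cancel' hl.le]
  simp only [onFun, h]
  exact disjoint_antiperiodicSigns_mul_of_even (Nat.even_pow.mpr ⟨even_two, by omega⟩)

theorem exists_dvd_mem_antiperiodicSigns_iff {a u : ℕ} (hu : Odd u) {α : ZMod n → ℤ} :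
    (∃ m, m ∣ 2 ^ a * u ∧ α ∈ antiperiodicSigns n m) ↔
      ∃ l : Fin (a + 1), α ∈ antiperiodicSigns n (2 ^ (l : ℕ) * u) := by
  constructor
  · rintro ⟨m, hm, hα⟩
    obtain ⟨l, hl, k, hk, hlk⟩ := Nat.exists_two_pow_mul_eq_mul_odd hu hm
    exact ⟨⟨l, by omega⟩, hlk ▸ antiperiodicSigns_subset_mul_of_odd hk hα⟩
  · rintro ⟨l, hα⟩
    exact ⟨_, Nat.mul_dvd_mul_right (pow_dvd_pow 2 (Nat.lt_succ_iff.mp l.2)) u, hα⟩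

section extension

variable (M : ℕ) [NeZero M]

def signExtend (f : Fin M → ℤˣ) (x : ZMod n) : ℤ :=
  f (Fin.ofNat M x.val) * (-1) ^ (x.val / M)

variable {M}

theorem signExtend_natCast (f : Fin M → ℤˣ) (hMn : M ≤ n) (r : Fin M) :
    signExtend M f (r : ZMod n) = f r := by
  have hr : ((r : ℕ) : ZMod n).val = r := ZMod.val_cast_of_lt (r.2.trans_le hMn)
  simp [signExtend, hr, Nat.div_eq_of_lt r.2]

theorem signExtend_mem [NeZero n] {c : ℕ} (hc : Even c) (hn : n = M * c) (f : Fin M → ℤˣ) :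
    signExtend M f ∈ antiperiodicSigns n M := by
  refine ⟨fun x => Int.isUnit_iff.mp ((Units.isUnit _).mul (isUnit_neg_one.pow _)), fun x => ?_⟩
  have hval : (x + M).val = (x.val + M) % (M * c) := by
    rw [ZMod.val_add, ZMod.val_natCast, Nat.add_mod_mod]
    subst hn
    rfl
  have hdiv : (x + M).val / M = (x.val / M + 1) % c := by
    rw [hval, Nat.mod_mul_right_div_self, Nat.add_div_right _ (NeZero.pos M)]
  have hmod : Fin.ofNat M (x + M).val = Fin.ofNat M x.val := by
    ext
    simp only [Fin.val_ofNat, hval, Nat.mod_mul_right_mod, Nat.add_mod_right]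
  simp only [signExtend, hdiv, hmod, neg_one_pow_mod_of_even hc, pow_succ]
  ring

theorem apply_eq_neg_one_pow_mul_apply_mod [NeZero n] {m : ℕ} {α : ZMod n → ℤ}
    (h : Antiperiodic α (m : ZMod n)) (x : ZMod n) :
    α x = (-1) ^ (x.val / m) * α (x.val % m : ℕ) := by
  conv_lhs => rw [← ZMod.natCast_zmod_val x, ← Nat.mod_add_div x.val m, Nat.cast_add,
    Nat.cast_mul, mul_comm]
  exact h.add_nat_mul_eq _

noncomputable def antiperiodicSignsEquiv [NeZero n] {c : ℕ} (hc : Even c) (hn : n = M * c) :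
    antiperiodicSigns n M ≃ (Fin M → ℤˣ) where
  toFun α r := (Int.isUnit_iff.mpr (α.2.1 r)).unit
  invFun f := ⟨signExtend M f, signExtend_mem hc hn f⟩
  left_inv α := by
    ext x
    rw [apply_eq_neg_one_pow_mul_apply_mod α.2.2 x]
    simp [signExtend, mul_comm]
  right_inv f := by
    have hc0 : c ≠ 0 := by
      rintro rfl
      exact NeZero.ne n (hn.trans (mul_zero M))
    ext r
    simp only [IsUnit.unit_spec]
    exact signExtend_natCast f (hn ▸ Nat.le_mul_of_pos_right M (Nat.pos_of_ne_zero hc0)) r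

theorem natCard_antiperiodicSigns [NeZero n] {c : ℕ} (hc : Even c) (hn : n = M * c) :
    Nat.card (antiperiodicSigns n M) = 2 ^ M := by
  rw [Nat.card_congr (antiperiodicSignsEquiv hc hn), Nat.card_fun, Nat.card_eq_fintype_card,
    Fintype.card_units_int, Nat.card_fin]

end extension

theorem natCard_iUnion_antiperiodicSigns_two_pow_mul [NeZero n] {a u : ℕ} (hu : Odd u)
    (hn : n = 2 ^ (a + 1) * u) :
    Nat.card (⋃ l : Fin (a + 1), antiperiodicSigns n (2 ^ (l : ℕ) * u)) =
      ∑ l ∈ Finset.range (a + 1), 2 ^ (2 ^ l * u) := by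
  have hcard (l : Fin (a + 1)) :
      Nat.card (antiperiodicSigns n (2 ^ (l : ℕ) * u)) = 2 ^ (2 ^ (l : ℕ) * u) := by
    have : NeZero (2 ^ (l : ℕ) * u) := ⟨(Nat.mul_pos (by positivity) hu.pos).ne'⟩
    refine natCard_antiperiodicSigns (c := 2 ^ (a + 1 - l))
      (Nat.even_pow.mpr ⟨even_two, by omega⟩) ?_
    rw [hn, mul_right_comm, ← pow_add, Nat.add_sub_cancel' l.2.le]
  have (l : Fin (a + 1)) : Finite (antiperiodicSigns n (2 ^ (l : ℕ) * u)) :=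
    Nat.finite_of_card_ne_zero (by simp [hcard])
  rw [Nat.card_congr (Set.unionEqSigmaOfDisjoint
    ((pairwise_disjoint_antiperiodicSigns_two_pow_mul u).comp_of_injective Fin.val_injective)),
    Nat.card_sigma, Finset.sum_congr rfl fun l _ => hcard l]
  exact Fin.sum_univ_eq_sum_range (fun l => 2 ^ (2 ^ l * u)) (a + 1)

end SignSeq

theorem stmt8_general (t a u : ℕ) (hu : Odd u) (htf : t = 2 ^ a * u) :
    Nat.card {α : ZMod (2 * t) → ℤ //
      (∀ i, α i = 1 ∨ α i = -1) ∧
      ∃ m : ℕ, m ∣ t ∧ ∀ i, α ((m : ZMod (2 * t)) + i) = -α i}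
      = ∑ l ∈ Finset.range (a + 1), 2 ^ (2 ^ l * u) := by
  have : NeZero (2 * t) := ⟨by subst htf; have := hu.pos; positivity⟩
  calc _ = Nat.card (⋃ l : Fin (a + 1),
        SignSeq.antiperiodicSigns (2 * t) (2 ^ (l : ℕ) * u)) := by
        refine Nat.card_congr (Equiv.subtypeEquivRight fun α => ?_)
        rw [Set.mem_iUnion, ← SignSeq.exists_dvd_mem_antiperiodicSigns_iff hu, ← htf]
        simp only [SignSeq.antiperiodicSigns, Antiperiodic, Set.mem_ofPred_eq, add_comm]
        exact ⟨fun ⟨hα, m, hm, h⟩ => ⟨m, hm, hα, h⟩,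
          fun ⟨m, hm, hα, h⟩ => ⟨hα, m, hm, h⟩⟩
    _ = _ := SignSeq.natCard_iUnion_antiperiodicSigns_two_pow_mul hu
        (by rw [htf, pow_succ]; ring)

/-- Write `t = 2^a · u` with `u` odd.  Then the union
`T_{2t} = ⋃_{m ∣ t} T_{2t,m}` of the sets of anti-periodic `±1` sequences has
cardinality `Σ_{l=0}^{a} 2^{2^l · u}`. -/
theorem stmt8 (t a u : ℕ) (ht : 1 ≤ t) (hu : Odd u) (htf : t = 2 ^ a * u) :
    Nat.card {α : ZMod (2 * t) → ℤ //
      (∀ i, α i = 1 ∨ α i = -1) ∧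
      ∃ m : ℕ, m ∣ t ∧ ∀ i, α ((m : ZMod (2 * t)) + i) = -α i}
      = ∑ l ∈ Finset.range (a + 1), 2 ^ (2 ^ l * u) :=
  stmt8_general t a u hu htf
end

section
/- Let I(t) denote the number of orbits of the cyclic shift group ℤ/2t acting on T_{2t} = ⋃_{m|t} T_{2t,m}. Then (2^t - Σ_{k|t, k≠t} 2^k)/(2t) ≤ I(t) ≤ Σ_{m|t} 2^m/(2m), and consequently I(t) ~ 2^{t-1}/t as t → ∞. -/
/-- The set `T_{2t} = ⋃_{m ∣ t} T_{2t,m}` of anti-periodic `±1` sequences of length `2t`. -/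
def Tset (t : ℕ) : Set (ZMod (2 * t) → ℤ) :=
  {α | (∀ i, α i = 1 ∨ α i = -1) ∧
    ∃ m : ℕ, m ∣ t ∧ ∀ i, α ((m : ZMod (2 * t)) + i) = -α i}

/-- The cyclic shift relation on `T_{2t}`: `β` is a cyclic shift of `α`. -/
def shiftRel (t : ℕ) (α β : Tset t) : Prop :=
  ∃ k : ZMod (2 * t), ∀ i, (β : ZMod (2 * t) → ℤ) i = (α : ZMod (2 * t) → ℤ) (i - k)

/-- `I(t)`: the number of orbits of the cyclic shift group on `T_{2t}`, i.e. the
number of inert conjugacy classes of word length `4t`. -/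
noncomputable def Icount (t : ℕ) : ℕ := Nat.card (Quot (shiftRel t))

/-!
Every `α ∈ T_{2t}` is a `±1`-sequence with an antiperiod dividing `t`; let `m` be the least
one. For a period `d` of `α`, the period `gcd d (2m)` cannot divide `m` (a period that is also an
antiperiod kills a `±1`-sequence), so it equals `2h` with `m / h` odd, and then `h ∣ m` is again
an antiperiod. Minimality gives `h = m`, so every period is a multiple of `2m`: the orbit of `α`
consists of `2m` distinct shifts, all in `T_{2t,m}`, a set of `2^m` sequences. Summing over
`m ∣ t` gives the upper bound. For the lower bound, the `2^t` elements of `T_{2t,t}` lie in orbits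
of at most `2t` elements. The proper divisors of `t` contribute `O(2^{t/2})`, which is negligible
against `2^t / (2t)`.
-/
open Function Filter Topology

namespace Function

variable {R M : Type*} [CommRing R] {f : R → M}

theorem Periodic.natCast_of_dvd {a b : ℕ} (ha : Periodic f a) (hab : a ∣ b) : Periodic f b := by
  obtain ⟨k, rfl⟩ := hab
  simpa [mul_comm] using ha.nat_mul k

theorem Periodic.natCast_gcd {a b : ℕ} (ha : Periodic f a) (hb : Periodic f b) :
    Periodic f (a.gcd b) := by
  have hbezout : ((a.gcd b : ℕ) : R) = (a.gcdA b : ℤ) * a + (a.gcdB b : ℤ) * b := by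
    have := congrArg (Int.cast : ℤ → R) (Nat.gcd_eq_gcd_ab a b)
    push_cast at this
    rw [this]; ring
  rw [hbezout]
  exact (ha.int_mul _).add_period (hb.int_mul _)

theorem Periodic.eq_zero_of_antiperiodic [AddGroup M] [IsAddTorsionFree M] {c : R}
    (hp : Periodic f c) (ha : Antiperiodic f c) : f = 0 :=
  funext fun x => self_eq_neg.mp ((hp x).symm.trans (ha x))

theorem Antiperiodic.exists_dvd_antiperiod_of_periodic [AddGroup M] [IsAddTorsionFree M]
    (hf : f ≠ 0) {m d : ℕ} (hm : Antiperiodic f m) (hd : Periodic f d) :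
    ∃ h, h ∣ m ∧ 2 * h ∣ d ∧ Antiperiodic f h := by
  set g := d.gcd (2 * m)
  have hg : Periodic f g := hd.natCast_gcd (by simpa using hm.periodic_two_mul)
  have hg_not_dvd : ¬ g ∣ m := fun hgm =>
    hf ((hg.natCast_of_dvd hgm).eq_zero_of_antiperiodic hm)
  obtain ⟨h, hgh⟩ : 2 ∣ g := by
    by_contra hodd
    exact hg_not_dvd <| (Nat.coprime_comm.mp <| (Nat.Prime.coprime_iff_not_dvd Nat.prime_two).2
      hodd).dvd_of_dvd_mul_left (Nat.gcd_dvd_right _ _)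
  obtain ⟨s, hs⟩ : h ∣ m :=
    Nat.dvd_of_mul_dvd_mul_left two_pos (hgh ▸ Nat.gcd_dvd_right d (2 * m))
  obtain ⟨u, rfl⟩ : Odd s := Nat.not_even_iff_odd.mp fun ⟨u, hu⟩ =>
    hg_not_dvd ⟨u, by rw [hs, hu, hgh]; ring⟩
  refine ⟨h, ⟨_, hs⟩, hgh ▸ Nat.gcd_dvd_left _ _, ?_⟩
  have hp : Periodic f (u * (2 * h)) := by simpa [hgh] using hg.nat_mul u
  have hh : (h : R) = -(u * (2 * h) - m) := by rw [hs]; push_cast; ring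
  rw [hh]
  exact (hp.sub_antiperiod hm).neg

end Function

/-- The paper's `T_{n,m}`. -/
def antiperiodicSigns (n m : ℕ) : Set (ZMod n → ℤ) :=
  {f | (∀ i, f i = 1 ∨ f i = -1) ∧ Antiperiodic f m}

def signExtend (n m : ℕ) [NeZero m] (ε : Fin m → Bool) : ZMod n → ℤ :=
  fun j => (-1) ^ (j.val / m) * if ε (Fin.ofNat m j.val) then 1 else -1

theorem Function.Antiperiodic.eq_neg_one_pow_mul {n m : ℕ} [NeZero n] {f : ZMod n → ℤ}
    (hf : Antiperiodic f m) (j : ZMod n) : f j = (-1) ^ (j.val / m) * f (j.val % m : ℕ) := by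
  conv_lhs => rw [← ZMod.natCast_zmod_val j, ← Nat.mod_add_div j.val m, Nat.cast_add,
    Nat.cast_mul, mul_comm, ← nsmul_eq_mul, hf.add_nsmul_eq, smul_eq_mul]

namespace ZMod

variable {n m : ℕ} [NeZero n]

theorem val_add_natCast_mod_of_dvd (hmn : m ∣ n) (j : ZMod n) :
    (j + m).val % m = j.val % m := by
  rw [val_add, val_natCast, Nat.add_mod_mod, Nat.mod_mod_of_dvd _ hmn, Nat.add_mod_right]

theorem val_add_natCast_div_mod_two [NeZero m] (h2m : 2 * m ∣ n) (j : ZMod n) :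
    (j + m).val / m % 2 = (j.val / m + 1) % 2 := by
  rw [val_add, val_natCast, Nat.add_mod_mod, ← Nat.mod_mul_right_div_self,
    Nat.mod_mod_of_dvd _ (by rwa [mul_comm]), Nat.mod_mul_right_div_self,
    Nat.add_div_right _ (NeZero.pos m)]

end ZMod

section SignExtend

variable {n m : ℕ} [NeZero m]

theorem signExtend_mem [NeZero n] (h2m : 2 * m ∣ n) (ε : Fin m → Bool) :
    signExtend n m ε ∈ antiperiodicSigns n m := by
  refine ⟨fun j => ?_, fun j => ?_⟩
  · rcases neg_one_pow_eq_or ℤ (j.val / m) with h | h <;> simp only [signExtend, h] <;>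
      split <;> simp
  · have hε : Fin.ofNat m (j + m).val = Fin.ofNat m j.val :=
      Fin.ext (by simp only [Fin.val_ofNat, ZMod.val_add_natCast_mod_of_dvd
        (dvd_of_mul_left_dvd h2m)])
    simp only [signExtend, hε]
    rw [neg_one_pow_eq_pow_mod_two, ZMod.val_add_natCast_div_mod_two h2m,
      ← neg_one_pow_eq_pow_mod_two, pow_succ]
    ring

theorem signExtend_natCast (hmn : m ≤ n) (ε : Fin m → Bool) (i : Fin m) :
    signExtend n m ε (i : ℕ) = if ε i then 1 else -1 := by
  have hi : ((i : ℕ) : ZMod n).val = i := ZMod.val_natCast_of_lt (i.2.trans_le hmn)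
  simp [signExtend, hi, Nat.div_eq_of_lt i.2]

theorem card_antiperiodicSigns [NeZero n] (h2m : 2 * m ∣ n) :
    Nat.card (antiperiodicSigns n m) = 2 ^ m := by
  have hmn : m ≤ n := (Nat.le_mul_of_pos_left m two_pos).trans
    (Nat.le_of_dvd (NeZero.pos n) h2m)
  let e : antiperiodicSigns n m ≃ (Fin m → Bool) :=
    { toFun f i := decide (f.1 (i : ℕ) = 1)
      invFun ε := ⟨signExtend n m ε, signExtend_mem h2m ε⟩
      left_inv f := by
        refine Subtype.ext (funext fun j => ?_)
        rw [f.2.2.eq_neg_one_pow_mul j]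
        rcases f.2.1 (j.val % m : ℕ) with h | h <;> simp [signExtend, h]
      right_inv ε := by
        funext i
        rcases Bool.eq_false_or_eq_true (ε i) with h | h <;> simp [signExtend_natCast hmn, h] }
  rw [Nat.card_congr e]
  simp

end SignExtend

theorem finite_setOf_forall_eq_one_or_eq_neg_one {ι : Type*} [Finite ι] :
    {f : ι → ℤ | ∀ i, f i = 1 ∨ f i = -1}.Finite :=
  (Set.Finite.pi fun _ => Set.toFinite {1, -1}).subset fun _ hf i _ => hf i

instance {n m : ℕ} [NeZero n] : Finite (antiperiodicSigns n m) :=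
  (finite_setOf_forall_eq_one_or_eq_neg_one.subset fun _ hf => hf.1).to_subtype

theorem sub_const_mem_antiperiodicSigns {n m : ℕ} {f : ZMod n → ℤ}
    (hf : f ∈ antiperiodicSigns n m) (k : ZMod n) :
    (fun i => f (i - k)) ∈ antiperiodicSigns n m :=
  ⟨fun _ => hf.1 _, hf.2.sub_const k⟩

section Tset

variable {t : ℕ}

theorem mem_Tset_iff {α : ZMod (2 * t) → ℤ} :
    α ∈ Tset t ↔ ∃ m, m ∣ t ∧ α ∈ antiperiodicSigns (2 * t) m := by
  simp only [Tset, antiperiodicSigns, Antiperiodic, Set.mem_ofPred_eq, add_comm]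
  aesop

instance [NeZero t] : Finite (Tset t) :=
  (finite_setOf_forall_eq_one_or_eq_neg_one.subset fun _ hα => hα.1).to_subtype

theorem sub_const_mem_Tset {α : ZMod (2 * t) → ℤ} (hα : α ∈ Tset t) (k : ZMod (2 * t)) :
    (fun i => α (i - k)) ∈ Tset t := by
  obtain ⟨m, hm, hαm⟩ := mem_Tset_iff.mp hα
  exact mem_Tset_iff.mpr ⟨m, hm, sub_const_mem_antiperiodicSigns hαm k⟩

theorem antiperiodicSigns_subset_Tset {m : ℕ} (hm : m ∣ t) :
    antiperiodicSigns (2 * t) m ⊆ Tset t :=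
  fun _ hα => mem_Tset_iff.mpr ⟨m, hm, hα⟩

theorem Tset.coe_ne_zero (α : Tset t) : (α : ZMod (2 * t) → ℤ) ≠ 0 := fun h => by
  rcases α.2.1 0 with h0 | h0 <;> simp [h] at h0

theorem shiftRel_equivalence : Equivalence (shiftRel t) where
  refl _ := ⟨0, fun _ => by rw [sub_zero]⟩
  symm := fun ⟨k, h⟩ => ⟨-k, fun i => by rw [h, sub_neg_eq_add, add_sub_cancel_right]⟩
  trans := fun ⟨k, h⟩ ⟨k', h'⟩ => ⟨k' + k, fun i => by rw [h', h, sub_sub]⟩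

open Classical in
noncomputable def minAntiperiod (α : Tset t) : ℕ :=
  Nat.find (mem_Tset_iff.mp α.2)

theorem minAntiperiod_dvd (α : Tset t) : minAntiperiod α ∣ t := by
  classical exact (Nat.find_spec (mem_Tset_iff.mp α.2)).1

theorem mem_antiperiodicSigns_minAntiperiod (α : Tset t) :
    (α : ZMod (2 * t) → ℤ) ∈ antiperiodicSigns (2 * t) (minAntiperiod α) := by
  classical exact (Nat.find_spec (mem_Tset_iff.mp α.2)).2

theorem minAntiperiod_le (α : Tset t) {m : ℕ} (hm : m ∣ t)
    (hα : (α : ZMod (2 * t) → ℤ) ∈ antiperiodicSigns (2 * t) m) :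
    minAntiperiod α ≤ m := by
  classical exact Nat.find_min' _ ⟨hm, hα⟩

theorem two_mul_minAntiperiod_dvd [NeZero t] (α : Tset t) {d : ℕ}
    (hd : Periodic (α : ZMod (2 * t) → ℤ) d) : 2 * minAntiperiod α ∣ d := by
  obtain ⟨h, hh, hhd, hanti⟩ := Antiperiodic.exists_dvd_antiperiod_of_periodic
    (Tset.coe_ne_zero α) (mem_antiperiodicSigns_minAntiperiod α).2 hd
  have hle : minAntiperiod α ≤ h :=
    minAntiperiod_le α (hh.trans (minAntiperiod_dvd α)) ⟨α.2.1, hanti⟩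
  have hpos : 0 < minAntiperiod α :=
    Nat.pos_of_dvd_of_pos (minAntiperiod_dvd α) (NeZero.pos t)
  rwa [le_antisymm (Nat.le_of_dvd hpos hh) hle] at hhd

theorem Tset.eq_of_shift_eq [NeZero t] (α : Tset t) {k k' : ℕ} (hk : k < 2 * minAntiperiod α)
    (hk' : k' < 2 * minAntiperiod α) (h : ∀ i, α.1 (i - k) = α.1 (i - k')) : k = k' := by
  wlog hle : k' ≤ k generalizing k k'
  · exact (this hk' hk (fun i => (h i).symm) (le_of_not_ge hle)).symm
  have hper : Periodic (α : ZMod (2 * t) → ℤ) (k - k' : ℕ) := fun x => by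
    simpa [Nat.cast_sub hle, add_sub_assoc'] using (h (x + k)).symm
  have := Nat.eq_zero_of_dvd_of_lt (two_mul_minAntiperiod_dvd α hper) (by omega)
  omega

end Tset

section Counting

variable {t : ℕ} [NeZero t]

theorem card_Tset_le_Icount_mul : Nat.card (Tset t) ≤ Icount t * (2 * t) := by
  have hsurj : Surjective fun p : Quot (shiftRel t) × ZMod (2 * t) =>
      (⟨fun i => p.1.out.1 (i - p.2), sub_const_mem_Tset p.1.out.2 p.2⟩ : Tset t) := by
    intro β
    obtain ⟨k, hk⟩ : shiftRel t (Quot.mk _ β).out β :=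
      shiftRel_equivalence.eqvGen_iff.mp (Quot.eqvGen_exact (Quot.out_eq _))
    exact ⟨(Quot.mk _ β, k), Subtype.ext (funext fun i => (hk i).symm)⟩
  calc Nat.card (Tset t) ≤ Nat.card (Quot (shiftRel t) × ZMod (2 * t)) :=
        Nat.card_le_card_of_surjective _ hsurj
    _ = Icount t * (2 * t) := by rw [Nat.card_prod, Nat.card_zmod, Icount]

theorem card_fiber_mul_le (m : ℕ) :
    Nat.card {c : Quot (shiftRel t) // minAntiperiod c.out = m} * (2 * m) ≤
      Nat.card (antiperiodicSigns (2 * t) m) := by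
  let F : {c : Quot (shiftRel t) // minAntiperiod c.out = m} × Fin (2 * m) →
      antiperiodicSigns (2 * t) m := fun p =>
    ⟨fun i => p.1.1.out.1 (i - (p.2 : ℕ)), sub_const_mem_antiperiodicSigns
      (by simpa only [p.1.2] using mem_antiperiodicSigns_minAntiperiod p.1.1.out) _⟩
  have hF : Injective F := by
    rintro ⟨⟨c, hc⟩, k⟩ ⟨⟨c', _⟩, k'⟩ h
    have hfun (i : ZMod (2 * t)) : c.out.1 (i - (k : ℕ)) = c'.out.1 (i - (k' : ℕ)) :=
      congrFun (congrArg Subtype.val h) i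
    obtain rfl : c = c' := by
      rw [← Quot.out_eq c, ← Quot.out_eq c']
      refine Quot.sound ⟨(k : ℕ) - (k' : ℕ), fun j => ?_⟩
      rw [← sub_add, sub_add_eq_add_sub, hfun, add_sub_cancel_right]
    subst hc
    obtain rfl : k = k' := Fin.ext (Tset.eq_of_shift_eq c.out k.2 k'.2 hfun)
    rfl
  calc _ = Nat.card ({c : Quot (shiftRel t) // minAntiperiod c.out = m} × Fin (2 * m)) := by
        rw [Nat.card_prod, Nat.card_fin]
    _ ≤ _ := Nat.card_le_card_of_injective F hF

theorem Icount_eq_sum_card_fiber :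
    Icount t =
      ∑ m ∈ t.divisors, Nat.card {c : Quot (shiftRel t) // minAntiperiod c.out = m} := by
  classical
  have := Fintype.ofFinite (Quot (shiftRel t))
  rw [Icount, Nat.card_eq_fintype_card, ← Finset.card_univ,
    Finset.card_eq_sum_card_fiberwise (f := fun c => minAntiperiod c.out) (t := t.divisors)
      fun c _ => Nat.mem_divisors.mpr ⟨minAntiperiod_dvd _, NeZero.ne t⟩]
  simp only [Nat.card_eq_fintype_card, Fintype.card_subtype]

theorem two_pow_le_Icount_mul : (2 : ℝ) ^ t ≤ Icount t * (2 * t) := by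
  have hcard : 2 ^ t ≤ Nat.card (Tset t) := by
    rw [← card_antiperiodicSigns (n := 2 * t) (m := t) dvd_rfl]
    exact Nat.card_mono (Set.toFinite _) (antiperiodicSigns_subset_Tset dvd_rfl)
  exact_mod_cast hcard.trans card_Tset_le_Icount_mul

theorem Icount_le_sum_divisors :
    (Icount t : ℝ) ≤ ∑ m ∈ t.divisors, (2 : ℝ) ^ m / (2 * m) := by
  rw [Icount_eq_sum_card_fiber]
  push_cast
  refine Finset.sum_le_sum fun m hm => ?_
  have hm0 : 0 < m := Nat.pos_of_mem_divisors hm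
  have : NeZero m := ⟨hm0.ne'⟩
  rw [le_div_iff₀ (by positivity)]
  exact_mod_cast (card_fiber_mul_le m).trans
    (card_antiperiodicSigns (Nat.mul_dvd_mul_left 2 (Nat.dvd_of_mem_divisors hm))).le

end Counting

theorem sum_properDivisors_two_pow_le (t : ℕ) :
    ∑ k ∈ t.properDivisors, (2 : ℝ) ^ k ≤ 2 * 2 ^ (t / 2) := by
  have hsub : t.properDivisors ⊆ Finset.range (t / 2 + 1) := fun k hk => by
    rw [Finset.mem_range, Nat.lt_succ_iff, Nat.le_div_iff_mul_le two_pos]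
    calc k * 2 ≤ k * (t / k) :=
          Nat.mul_le_mul_left k (Nat.one_lt_div_of_mem_properDivisors hk)
      _ = t := Nat.mul_div_cancel' (Nat.mem_properDivisors.mp hk).1
  calc _ ≤ ∑ k ∈ Finset.range (t / 2 + 1), (2 : ℝ) ^ k :=
        Finset.sum_le_sum_of_subset_of_nonneg hsub fun _ _ _ => by positivity
    _ ≤ 2 * 2 ^ (t / 2) := by
        rw [geom_sum_eq (by norm_num), pow_succ]
        linarith

theorem sum_divisors_le (t : ℕ) [NeZero t] :
    ∑ m ∈ t.divisors, (2 : ℝ) ^ m / (2 * m) ≤ 2 ^ t / (2 * t) + 2 * 2 ^ (t / 2) := by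
  rw [← Nat.insert_self_properDivisors (NeZero.ne t),
    Finset.sum_insert Nat.self_notMem_properDivisors]
  gcongr
  refine (Finset.sum_le_sum fun m hm => ?_).trans (sum_properDivisors_two_pow_le t)
  have : (1 : ℝ) ≤ m := by exact_mod_cast Nat.pos_of_mem_properDivisors hm
  exact div_le_self (by positivity) (by linarith)

theorem tendsto_mul_two_pow_half_div_two_pow :
    Tendsto (fun t : ℕ => (t : ℝ) * 2 ^ (t / 2) / 2 ^ t) atTop (𝓝 0) := by
  have hlim : Tendsto (fun t : ℕ => (t : ℝ) / √2 ^ t) atTop (𝓝 0) :=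
    (isLittleO_coe_const_pow_of_one_lt Real.one_lt_sqrt_two).tendsto_div_nhds_zero
  refine squeeze_zero (fun t => by positivity) (fun t => ?_) hlim
  have hsqrt : √2 ^ t ≤ 2 ^ (t - t / 2) := by
    rw [show (2 : ℝ) ^ (t - t / 2) = √2 ^ (2 * (t - t / 2)) by
      rw [pow_mul, Real.sq_sqrt zero_le_two]]
    refine pow_le_pow_right₀ Real.one_lt_sqrt_two.le ?_
    omega
  rw [div_le_div_iff₀ (by positivity) (by positivity), mul_assoc]
  gcongr
  calc (2 : ℝ) ^ (t / 2) * √2 ^ t ≤ 2 ^ (t / 2) * 2 ^ (t - t / 2) := by gcongr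
    _ = 2 ^ t := by rw [← pow_add, Nat.add_sub_cancel' (Nat.div_le_self t 2)]

theorem one_le_Icount_div (t : ℕ) [NeZero t] : 1 ≤ (Icount t : ℝ) / (2 ^ t / (2 * t)) := by
  have ht : (0 : ℝ) < t := mod_cast NeZero.pos t
  rw [one_le_div (by positivity), div_le_iff₀ (by positivity)]
  exact two_pow_le_Icount_mul

theorem Icount_div_le (t : ℕ) [NeZero t] :
    (Icount t : ℝ) / (2 ^ t / (2 * t)) ≤ 1 + 4 * (t * 2 ^ (t / 2) / 2 ^ t) := by
  have ht : (0 : ℝ) < t := mod_cast NeZero.pos t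
  rw [div_le_iff₀ (by positivity)]
  calc (Icount t : ℝ) ≤ 2 ^ t / (2 * t) + 2 * 2 ^ (t / 2) :=
        Icount_le_sum_divisors.trans (sum_divisors_le t)
    _ = (1 + 4 * (t * 2 ^ (t / 2) / 2 ^ t)) * (2 ^ t / (2 * t)) := by
        field_simp
        ring

/-- `(2^t - Σ_{k∣t,k≠t} 2^k)/(2t) ≤ I(t) ≤ Σ_{m∣t} 2^m/(2m)`, and
consequently `I(t) ~ 2^{t-1}/t` as `t → ∞`. -/
theorem stmt11 :
    (∀ t : ℕ, 1 ≤ t →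
      ((2 : ℝ) ^ (t : ℕ) - ∑ k ∈ Nat.properDivisors t, (2 : ℝ) ^ (k : ℕ)) / (2 * t) ≤
          (Icount t : ℝ) ∧
      (Icount t : ℝ) ≤ ∑ m ∈ Nat.divisors t, (2 : ℝ) ^ (m : ℕ) / (2 * m)) ∧
    Filter.Tendsto
      (fun t : ℕ => (Icount t : ℝ) / ((2 : ℝ) ^ (t : ℕ) / (2 * t)))
      Filter.atTop (nhds 1) := by
  refine ⟨fun t ht => ?_, ?_⟩
  · have : NeZero t := ⟨by omega⟩
    refine ⟨?_, Icount_le_sum_divisors⟩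
    have hsum : 0 ≤ ∑ k ∈ t.properDivisors, (2 : ℝ) ^ k := by positivity
    have ht' : (0 : ℝ) < t := mod_cast ht
    rw [div_le_iff₀ (by positivity)]
    linarith [two_pow_le_Icount_mul (t := t)]
  · have hupper :
        Tendsto (fun t : ℕ => 1 + 4 * (t * 2 ^ (t / 2) / 2 ^ t : ℝ)) atTop (𝓝 1) := by
      simpa using (tendsto_mul_two_pow_half_div_two_pow.const_mul 4).const_add 1
    refine tendsto_of_tendsto_of_tendsto_of_le_of_le' tendsto_const_nhds hupper ?_ ?_ <;>
      filter_upwards [eventually_ne_atTop 0] with t ht <;> have : NeZero t := ⟨ht⟩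
    exacts [one_le_Icount_div t, Icount_div_le t]
end

section
/- Let t be even and let α ∈ {±1}^t be palindromic (α_i = α_{t+1-i} for all i). Then each orbit of the cyclic shift group acting on palindromic sequences of even length t contains at most 2 palindromic sequences, and the cyclic shift of α by t/2 positions is palindromic. -/
/-- In a finite additive cyclic group there is at most one nonzero 2-torsion element. -/
lemma two_torsion_unique {G : Type*} [AddGroup G] [Finite G] [IsAddCyclic G] {x y : G}
    (hx : 2 • x = 0) (hy : 2 • y = 0) (hx0 : x ≠ 0) (hy0 : y ≠ 0) : x = y := by
  classical
  cases nonempty_fintype G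
  by_contra hne
  have hle : ({a : G | 2 • a = 0} : Finset G).card ≤ 2 :=
    IsAddCyclic.card_nsmul_eq_zero_le (by norm_num)
  have hsub : ({0, x, y} : Finset G) ⊆ ({a : G | 2 • a = 0} : Finset G) := by
    intro a ha
    simp only [Finset.mem_insert, Finset.mem_singleton] at ha
    simp only [Finset.mem_filter, Finset.mem_univ, true_and, Set.mem_setOf_eq]
    rcases ha with rfl | rfl | rfl
    · simp
    · exact hx
    · exact hy
  have h3 : ({0, x, y} : Finset G).card = 3 := by
    rw [Finset.card_insert_of_notMem (by simp [Ne.symm hx0, Ne.symm hy0]),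
      Finset.card_insert_of_notMem (by simp [hne]), Finset.card_singleton]
  have := Finset.card_le_card hsub
  omega

/-- Let `t` be even and `α : ℤ/t → {±1}` palindromic
(`α(i) = α(1 - i)` for all `i`, the mod-`t` form of `α_i = α_{t+1-i}`).  Then:
(1) the cyclic shift of `α` by `t/2` is palindromic;
(2) if the shift by `k` is palindromic then `k = 0` or `k = t/2`, unless the
shifted sequences coincide (i.e. `α` has a nonzero period);
(3) each orbit of the cyclic shift group contains at most `2` palindromic sequences. -/
theorem stmt17 (t : ℕ) (ht : 1 ≤ t) (hte : Even t)
    (α : ZMod t → ℤ) (hval : ∀ i, α i = 1 ∨ α i = -1)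
    (hpal : ∀ i, α i = α (1 - i)) :
    (∀ i : ZMod t, α (i - ((t / 2 : ℕ) : ZMod t)) = α (1 - i - ((t / 2 : ℕ) : ZMod t))) ∧
    (∀ k : ZMod t, (∀ i, α (i - k) = α (1 - i - k)) →
      k = 0 ∨ k = ((t / 2 : ℕ) : ZMod t) ∨ ∃ d : ZMod t, d ≠ 0 ∧ ∀ i, α (i - d) = α i) ∧
    Set.ncard {β : ZMod t → ℤ |
      (∃ k : ZMod t, ∀ i, β i = α (i - k)) ∧ ∀ i, β i = β (1 - i)} ≤ 2 := by
  have : NeZero t := ⟨by omega⟩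
  set h : ZMod t := ((t / 2 : ℕ) : ZMod t) with hh
  have h2h : h + h = 0 := by
    rw [hh, ← Nat.cast_add]
    obtain ⟨m, hm⟩ := hte
    have : t / 2 + t / 2 = t := by omega
    rw [this, ZMod.natCast_self]
  -- (1)
  have part1 : ∀ i : ZMod t, α (i - h) = α (1 - i - h) := by
    intro i
    have := hpal (i - h)
    rw [this]
    congr 1
    have : (1 : ZMod t) - (i - h) = 1 - i - h + (h + h) := by ring
    rw [this, h2h, add_zero]
  -- key: shift-palindromic at k implies 2k is a period
  have key : ∀ k : ZMod t, (∀ i, α (i - k) = α (1 - i - k)) →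
      ∀ i, α (i - (k + k)) = α i := by
    intro k hk i
    have h1 := hk (i - k)
    have h2 := hpal i
    have e1 : i - k - k = i - (k + k) := by ring
    have e2 : (1 : ZMod t) - (i - k) - k = 1 - i := by ring
    rw [e1, e2] at h1
    rw [h1, ← h2]
  -- 2k = 0 → k = 0 ∨ k = t/2
  have two_eq_zero : ∀ k : ZMod t, k + k = 0 → k = 0 ∨ k = h := by
    intro k hk
    have hv : ((k.val + k.val : ℕ) : ZMod t) = 0 := by
      push_cast
      rw [ZMod.natCast_val, ZMod.cast_id]
      exact hk
    have hdvd : t ∣ k.val + k.val := (ZMod.natCast_eq_zero_iff _ _).mp hv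
    have hklt : k.val < t := ZMod.val_lt k
    rcases hdvd with ⟨c, hc⟩
    have hc2 : c = 0 ∨ c = 1 := by
      have h2 : k.val + k.val < t * 2 := by omega
      rw [hc] at h2
      have := Nat.lt_of_mul_lt_mul_left h2
      omega
    rcases hc2 with rfl | rfl
    · left
      have : k.val = 0 := by omega
      have := (ZMod.val_eq_zero k).mp this
      exact this
    · right
      have : k.val = t / 2 := by omega
      rw [hh, ← this, ZMod.natCast_val, ZMod.cast_id]
  -- (2)
  have part2 : ∀ k : ZMod t, (∀ i, α (i - k) = α (1 - i - k)) →
      k = 0 ∨ k = h ∨ ∃ d : ZMod t, d ≠ 0 ∧ ∀ i, α (i - d) = α i := by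
    intro k hk
    by_cases h2k : k + k = 0
    · rcases two_eq_zero k h2k with h0 | h0
      · exact Or.inl h0
      · exact Or.inr (Or.inl h0)
    · exact Or.inr (Or.inr ⟨k + k, h2k, key k hk⟩)
  refine ⟨part1, part2, ?_⟩
  -- (3)
  -- the subgroup of periods
  set D : AddSubgroup (ZMod t) :=
    { carrier := {d | ∀ i, α (i - d) = α i}
      zero_mem' := by intro i; simp
      add_mem' := by
        intro a b ha hb i
        have : i - (a + b) = (i - b) - a := by ring
        rw [this, ha, hb]
      neg_mem' := by
        intro a ha i
        have := ha (i - -a)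
        rw [show i - -a - a = i by ring] at this
        exact this.symm } with hD
  have hDmem : ∀ d : ZMod t, d ∈ D ↔ ∀ i, α (i - d) = α i := fun d => Iff.rfl
  -- quotient group
  set G := ZMod t ⧸ D with hG
  have hsurj := QuotientAddGroup.mk'_surjective D
  have : IsAddCyclic G := isAddCyclic_of_surjective (QuotientAddGroup.mk' D) hsurj
  have : Finite G := Finite.of_surjective _ hsurj
  -- members of the set are palindromic shifts
  set S := {β : ZMod t → ℤ |
      (∃ k : ZMod t, ∀ i, β i = α (i - k)) ∧ ∀ i, β i = β (1 - i)} with hS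
  -- shifts agree iff difference is a period
  have shift_eq : ∀ k l : ZMod t, (QuotientAddGroup.mk' D) k = (QuotientAddGroup.mk' D) l →
      ∀ i, α (i - k) = α (i - l) := by
    intro k l hkl i
    rw [QuotientAddGroup.mk'_apply, QuotientAddGroup.mk'_apply] at hkl
    have hmem : -k + l ∈ D := QuotientAddGroup.eq.mp hkl
    have := (hDmem _).mp hmem (i - k)
    rw [show i - k - (-k + l) = i - l by ring] at this
    exact this.symm
  by_cases hex : ∃ β₀ ∈ S, β₀ ≠ α
  · rcases hex with ⟨β₀, hβ₀S, hβ₀ne⟩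
    have hsub : S ⊆ {α, β₀} := by
      rintro β ⟨⟨k, hk⟩, hbpal⟩
      rcases hβ₀S with ⟨⟨k₀, hk₀⟩, hb0pal⟩
      -- shift-palindromic conditions
      have hkp : ∀ i, α (i - k) = α (1 - i - k) := by
        intro i; rw [← hk i, ← hk (1 - i)]; exact hbpal i
      have hk₀p : ∀ i, α (i - k₀) = α (1 - i - k₀) := by
        intro i; rw [← hk₀ i, ← hk₀ (1 - i)]; exact hb0pal i
      have h2k : 2 • ((QuotientAddGroup.mk' D) k) = 0 := by
        rw [two_nsmul, ← map_add, QuotientAddGroup.mk'_apply, QuotientAddGroup.eq_zero_iff]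
        exact (hDmem _).mpr (key k hkp)
      have h2k₀ : 2 • ((QuotientAddGroup.mk' D) k₀) = 0 := by
        rw [two_nsmul, ← map_add, QuotientAddGroup.mk'_apply, QuotientAddGroup.eq_zero_iff]
        exact (hDmem _).mpr (key k₀ hk₀p)
      by_cases hk0 : (QuotientAddGroup.mk' D) k = 0
      · -- β = α
        left
        funext i
        rw [hk i]
        have hmem : k ∈ D := (QuotientAddGroup.eq_zero_iff k).mp hk0
        exact (hDmem _).mp hmem i
      · have hk₀0 : (QuotientAddGroup.mk' D) k₀ ≠ 0 := by
          intro hc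
          apply hβ₀ne
          funext i
          rw [hk₀ i]
          exact (hDmem _).mp ((QuotientAddGroup.eq_zero_iff k₀).mp hc) i
        have := two_torsion_unique h2k h2k₀ hk0 hk₀0
        right
        funext i
        rw [hk i, hk₀ i]
        exact shift_eq k k₀ this i
    calc S.ncard ≤ ({α, β₀} : Set (ZMod t → ℤ)).ncard :=
          Set.ncard_le_ncard hsub ((Set.finite_singleton _).insert _)
      _ ≤ 2 := by
          rw [Set.ncard_pair (Ne.symm hβ₀ne)]
  · have hsub : S ⊆ {α} := by
      intro β hβ
      by_contra hne
      exact hex ⟨β, hβ, hne⟩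
    calc S.ncard ≤ ({α} : Set (ZMod t → ℤ)).ncard :=
          Set.ncard_le_ncard hsub (Set.finite_singleton _)
      _ ≤ 2 := by rw [Set.ncard_singleton]; omega
end
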